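/- In base b dismal arithmetic, a number n (different from β = b−1) is a dismal prime if and only if the dismal sum of its distinct dismal prime divisors equals n. -/

import Mathlib

/-- The `i`-th base-`b` digit of `n`. -/
def digit (b n i : ℕ) : ℕ := n / b ^ i % b

/-- Dismal addition in base `b`: digitwise maximum of base-`b` digits. -/
def dadd (b m n : ℕ) : ℕ :=
  ∑ i ∈ Finset.range (m + n + 1), max (digit b m i) (digit b n i) * b ^ i

/-- Dismal multiplication in base `b`: digit convolution with `min` as digit
product and `max` as digit sum (no carries). -/
def dmul (b m n : ℕ) : ℕ :=
  ∑ k ∈ Finset.range (m + n + 1),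
    ((Finset.range (k + 1)).sup fun i => min (digit b m i) (digit b n (k - i))) * b ^ k

/-- The number of base-`b` digits of `n`. -/
def dlen (b n : ℕ) : ℕ := (Nat.digits b n).length

/-- A base-`b` dismal prime: a number other than `b - 1` whose only dismal
factorizations are `(b - 1) ⊠ p`. -/
def DPrime (b p : ℕ) : Prop :=
  p ≠ b - 1 ∧ ∀ m n : ℕ, dmul b m n = p →
    (m = b - 1 ∧ n = p) ∨ (m = p ∧ n = b - 1)

/-- `p` dismally divides `n` in base `b`. -/
def DDvd (b p n : ℕ) : Prop := ∃ q, dmul b p q = n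

open scoped Classical in
/-- The finite set of dismal divisors of `n` (every dismal divisor of a
nonzero `n` has at most `dlen b n` digits). -/
noncomputable def ddivisors (b n : ℕ) : Finset ℕ :=
  (Finset.range (b ^ dlen b n)).filter fun p => DDvd b p n

/-- The dismal sum of a finite set of numbers: digitwise supremum. -/
def ddigitSum (b : ℕ) (S : Finset ℕ) : ℕ :=
  ∑ i ∈ Finset.range (S.sup id + 1), (S.sup fun p => digit b p i) * b ^ i

open scoped Classical in
/-- The finite set of dismal prime divisors of `n`. -/
noncomputable def primeDivisors (b n : ℕ) : Finset ℕ :=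
  (Finset.range (b ^ dlen b n)).filter fun p => DPrime b p ∧ DDvd b p n

/-!
If `n` is prime its only prime divisor is `n` itself, since `n = n ⊠ β`. Conversely, suppose the
digitwise maximum of the prime divisors of `n` is `n`. Some prime divisor `p` then has a nonzero
digit in the leading position of `n`, so in `n = p ⊠ r` every digit of `r` beyond the units digit
would create a nonzero digit of `n` beyond its length: `r` is a single digit `d`, and `n` is `p`
with its digits cut off at `d`. A prime has the digit `β` (otherwise it would factor as
`p ⊠ (its largest digit)`), and all digits of a prime divisor are bounded by those of `n`, so `n`
has the digit `β` as well. Hence `d = β` and `n = p` is prime.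
-/

variable {b : ℕ}

section Digit

lemma digit_lt (hb : 0 < b) (n i : ℕ) : digit b n i < b :=
  Nat.mod_lt _ hb

lemma digit_eq_zero_of_lt_pow {n i : ℕ} (h : n < b ^ i) : digit b n i = 0 := by
  rw [digit, Nat.div_eq_of_lt h, Nat.zero_mod]

lemma digit_eq_zero_of_le (hb : 1 < b) {n i : ℕ} (h : n ≤ i) : digit b n i = 0 :=
  digit_eq_zero_of_lt_pow <| (Nat.lt_pow_self hb).trans_le (Nat.pow_le_pow_right (by omega) h)

lemma digit_zero_of_lt {d : ℕ} (hd : d < b) : digit b d 0 = d := by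
  simp [digit, Nat.mod_eq_of_lt hd]

lemma digit_eq_zero_of_lt_of_pos {d i : ℕ} (hd : d < b) (hi : 0 < i) : digit b d i = 0 :=
  digit_eq_zero_of_lt_pow (hd.trans_le (Nat.le_self_pow hi.ne' b))

lemma digit_div_base (n j : ℕ) : digit b (n / b) j = digit b n (j + 1) := by
  simp only [digit, Nat.div_div_eq_div_mul, pow_succ']

lemma sum_digit_mul_pow (n N : ℕ) :
    ∑ i ∈ Finset.range N, digit b n i * b ^ i = n % b ^ N := by
  induction N with
  | zero => simp [Nat.mod_one]
  | succ N ih =>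
    rw [Finset.sum_range_succ, ih, pow_succ, Nat.mod_mul, digit]
    ring

lemma digit_ext (hb : 1 < b) {x y : ℕ} (h : ∀ k, digit b x k = digit b y k) : x = y := by
  obtain ⟨N, hx, hy⟩ : ∃ N, x < b ^ N ∧ y < b ^ N :=
    ⟨x + y, (Nat.lt_pow_self hb).trans_le (Nat.pow_le_pow_right (by omega) (by omega)),
      (Nat.lt_pow_self hb).trans_le (Nat.pow_le_pow_right (by omega) (by omega))⟩
  rw [← Nat.mod_eq_of_lt hx, ← Nat.mod_eq_of_lt hy, ← sum_digit_mul_pow,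
    ← sum_digit_mul_pow]
  simp only [h]

lemma lt_of_digit_eq_zero (hb : 1 < b) {r : ℕ} (h : ∀ j, 0 < j → digit b r j = 0) :
    r < b := by
  have hdiv : r / b = 0 := digit_ext hb fun j => by
    rw [digit_div_base, h _ j.succ_pos]
    simp [digit]
  exact (Nat.div_eq_zero_iff_lt (by omega)).mp hdiv

lemma sum_mul_pow_lt {f : ℕ → ℕ} (hf : ∀ i, f i < b) (N : ℕ) :
    ∑ i ∈ Finset.range N, f i * b ^ i < b ^ N := by
  induction N with
  | zero => simp
  | succ N ih =>
    rw [Finset.sum_range_succ, pow_succ']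
    have := Nat.mul_le_mul_right (b ^ N) (hf N)
    rw [Nat.succ_mul] at this
    linarith

lemma digit_add_mul_pow_of_lt (hb : 0 < b) {s k N : ℕ} (c : ℕ) (hk : k < N) :
    digit b (s + c * b ^ N) k = digit b s k := by
  obtain ⟨M, rfl⟩ : ∃ M, N = k + 1 + M := ⟨N - k - 1, by omega⟩
  have hsplit : c * b ^ (k + 1 + M) = c * b ^ M * b * b ^ k := by ring
  rw [digit, digit, hsplit, Nat.add_mul_div_right _ _ (pow_pos hb k), Nat.add_mul_mod_self_right]

lemma digit_add_mul_pow_self (hb : 0 < b) {s N : ℕ} (c : ℕ) (hs : s < b ^ N) :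
    digit b (s + c * b ^ N) N = c % b := by
  rw [digit, Nat.add_mul_div_right _ _ (pow_pos hb N), Nat.div_eq_of_lt hs, zero_add]

lemma digit_sum_mul_pow (hb : 0 < b) {f : ℕ → ℕ} (hf : ∀ i, f i < b) (N k : ℕ) :
    digit b (∑ i ∈ Finset.range N, f i * b ^ i) k = if k < N then f k else 0 := by
  induction N with
  | zero => simp [digit]
  | succ N ih =>
    rw [Finset.sum_range_succ]
    rcases lt_trichotomy k N with hk | rfl | hk
    · rw [digit_add_mul_pow_of_lt hb _ hk, ih, if_pos hk, if_pos (by omega)]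
    · rw [digit_add_mul_pow_self hb _ (sum_mul_pow_lt hf k), Nat.mod_eq_of_lt (hf k),
        if_pos (by omega)]
    · rw [← Finset.sum_range_succ, if_neg (by omega), digit_eq_zero_of_lt_pow
        ((sum_mul_pow_lt hf _).trans_le (Nat.pow_le_pow_right hb hk))]

end Digit

section Length

lemma lt_pow_dlen (hb : 1 < b) (n : ℕ) : n < b ^ dlen b n :=
  Nat.lt_base_pow_length_digits hb

lemma digit_eq_zero_of_dlen_le (hb : 1 < b) {n i : ℕ} (h : dlen b n ≤ i) : digit b n i = 0 :=
  digit_eq_zero_of_lt_pow ((lt_pow_dlen hb n).trans_le (Nat.pow_le_pow_right (by omega) h))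

lemma digit_dlen_sub_one_ne_zero (hb : 1 < b) {n : ℕ} (hn : n ≠ 0) :
    digit b n (dlen b n - 1) ≠ 0 := by
  have hL : 0 < dlen b n := List.length_pos_iff.mpr (Nat.digits_ne_nil_iff_ne_zero.mpr hn)
  have hlow : b ^ (dlen b n - 1) ≤ n := (Nat.lt_digits_length_iff hb n).mp (Nat.sub_lt hL one_pos)
  have hhigh : n < b * b ^ (dlen b n - 1) := by
    rw [← pow_succ', Nat.sub_add_cancel hL]
    exact lt_pow_dlen hb n
  rw [digit, Nat.mod_eq_of_lt ((Nat.div_lt_iff_lt_mul (by positivity)).mpr hhigh)]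
  exact (Nat.div_pos hlow (by positivity)).ne'

end Length

section Dmul

lemma digit_dmul (hb : 1 < b) (m q k : ℕ) :
    digit b (dmul b m q) k =
      (Finset.range (k + 1)).sup fun i => min (digit b m i) (digit b q (k - i)) := by
  rw [dmul, digit_sum_mul_pow (by omega) (fun j => ?_)]
  · split_ifs with hk
    · rfl
    · refine ((Finset.sup_eq_bot_iff _ _).mpr fun i _ => ?_).symm
      rcases le_or_gt m i with hi | hi
      · simp [digit_eq_zero_of_le hb hi]
      · simp [digit_eq_zero_of_le hb (show q ≤ k - i by omega)]
  · exact (Finset.sup_lt_iff (by rw [Nat.bot_eq_zero]; omega)).mpr fun i _ =>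
      (min_le_left _ _).trans_lt (digit_lt (by omega) m i)

lemma min_digit_le_digit_dmul (hb : 1 < b) (m q i j : ℕ) :
    min (digit b m i) (digit b q j) ≤ digit b (dmul b m q) (i + j) := by
  rw [digit_dmul hb]
  simpa using Finset.le_sup (f := fun i' => min (digit b m i') (digit b q (i + j - i')))
    (Finset.mem_range.mpr (by omega : i < i + j + 1))

lemma digit_dmul_of_lt_right (hb : 1 < b) {p r : ℕ} (hr : r < b) (k : ℕ) :
    digit b (dmul b p r) k = min (digit b p k) r := by
  apply le_antisymm
  · rw [digit_dmul hb]
    refine Finset.sup_le fun i hi => ?_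
    rcases (Nat.lt_succ_iff.mp (Finset.mem_range.mp hi)).lt_or_eq with h | rfl
    · simp [digit_eq_zero_of_lt_of_pos hr (Nat.sub_pos_of_lt h)]
    · rw [Nat.sub_self, digit_zero_of_lt hr]
  · simpa [digit_zero_of_lt hr] using min_digit_le_digit_dmul hb p r k 0

lemma dmul_eq_self_of_digit_le (hb : 1 < b) {p d : ℕ} (hd : d < b)
    (h : ∀ k, digit b p k ≤ d) : dmul b p d = p :=
  digit_ext hb fun k => by rw [digit_dmul_of_lt_right hb hd, min_eq_left (h k)]

lemma dmul_sub_one_right (hb : 1 < b) (p : ℕ) : dmul b p (b - 1) = p :=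
  dmul_eq_self_of_digit_le hb (by omega) fun k => Nat.le_sub_one_of_lt (digit_lt (by omega) p k)

/-- Every digit of the cofactor `r` past the units digit meets the leading digit of `p`
at a position beyond the length of `n`. -/
lemma lt_of_dmul_eq_of_digit_ne_zero (hb : 1 < b) {p r n : ℕ} (h : dmul b p r = n)
    (hp : digit b p (dlen b n - 1) ≠ 0) : r < b := by
  refine lt_of_digit_eq_zero hb fun j hj => ?_
  have hmin := min_digit_le_digit_dmul hb p r (dlen b n - 1) j
  rw [h, digit_eq_zero_of_dlen_le (n := n) hb (by omega)] at hmin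
  omega

end Dmul

section Prime

lemma DPrime.exists_digit_eq_sub_one (hb : 1 < b) {p : ℕ} (hp : DPrime b p) :
    ∃ i, digit b p i = b - 1 := by
  obtain ⟨i, -, hi⟩ := Finset.exists_mem_eq_sup (Finset.range (p + 1)) (by simp) (digit b p)
  have hle : ∀ k, digit b p k ≤ digit b p i := fun k => by
    rcases lt_or_ge k (p + 1) with hk | hk
    · exact hi ▸ Finset.le_sup (Finset.mem_range.mpr hk)
    · simp [digit_eq_zero_of_le hb (show p ≤ k by omega)]
  rcases hp.2 p _ (dmul_eq_self_of_digit_le hb (digit_lt (by omega) p i) hle) with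
    ⟨hpβ, -⟩ | ⟨-, hiβ⟩
  · exact absurd hpβ hp.1
  · exact ⟨i, hiβ⟩

lemma dPrime_and_dDvd_of_mem_primeDivisors {p n : ℕ} (h : p ∈ primeDivisors b n) :
    DPrime b p ∧ DDvd b p n := by
  classical
  exact (Finset.mem_filter.mp h).2

lemma DPrime.primeDivisors_eq (hb : 1 < b) {p : ℕ} (hp : DPrime b p) :
    primeDivisors b p = {p} := by
  ext q
  simp only [primeDivisors, Finset.mem_filter, Finset.mem_range, Finset.mem_singleton]
  constructor
  · rintro ⟨-, hq, r, hr⟩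
    rcases hp.2 q r hr with ⟨rfl, -⟩ | ⟨hqp, -⟩
    · exact absurd rfl hq.1
    · exact hqp
  · rintro rfl
    exact ⟨lt_pow_dlen hb q, hp, b - 1, dmul_sub_one_right hb q⟩

end Prime

section DigitSum

lemma digit_ddigitSum (hb : 1 < b) (S : Finset ℕ) (k : ℕ) :
    digit b (ddigitSum b S) k = S.sup fun p => digit b p k := by
  rw [ddigitSum, digit_sum_mul_pow (by omega) (fun i => ?_)]
  · split_ifs with hk
    · rfl
    · refine ((Finset.sup_eq_bot_iff _ _).mpr fun p hp => ?_).symm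
      exact digit_eq_zero_of_le hb ((Finset.le_sup (f := id) hp).trans (by omega))
  · exact (Finset.sup_lt_iff (by rw [Nat.bot_eq_zero]; omega)).mpr fun p _ =>
      digit_lt (by omega) p i

lemma ddigitSum_empty : ddigitSum b ∅ = 0 := by
  simp [ddigitSum]

lemma ddigitSum_singleton (hb : 1 < b) (n : ℕ) : ddigitSum b {n} = n :=
  digit_ext hb fun k => by rw [digit_ddigitSum hb, Finset.sup_singleton]

lemma mem_of_ddigitSum_eq (hb : 1 < b) {n : ℕ} {S : Finset ℕ} (hn : n ≠ 0)
    (hS : ∀ p ∈ S, DPrime b p ∧ DDvd b p n) (hsum : ddigitSum b S = n) : n ∈ S := by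
  have hdig : ∀ k, (S.sup fun p => digit b p k) = digit b n k := fun k => by
    rw [← digit_ddigitSum hb, hsum]
  obtain rfl | ⟨p₀, hp₀⟩ := S.eq_empty_or_nonempty
  · exact absurd (hsum.symm.trans ddigitSum_empty) hn
  obtain ⟨i, hi⟩ := (hS p₀ hp₀).1.exists_digit_eq_sub_one hb
  have hni : digit b n i = b - 1 := by
    have hle : digit b p₀ i ≤ digit b n i :=
      hdig i ▸ Finset.le_sup (f := fun p => digit b p i) hp₀
    have := digit_lt (by omega : 0 < b) n i
    omega
  obtain ⟨p, hpS, hp⟩ :=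
    Finset.exists_mem_eq_sup S ⟨p₀, hp₀⟩ fun p => digit b p (dlen b n - 1)
  obtain ⟨r, hr⟩ := (hS p hpS).2
  have hrb : r < b := lt_of_dmul_eq_of_digit_ne_zero hb hr <| by
    rw [← hp, hdig]
    exact digit_dlen_sub_one_ne_zero hb hn
  have hrβ : r = b - 1 := by
    have hnr := digit_dmul_of_lt_right (p := p) hb hrb i
    rw [hr, hni] at hnr
    omega
  rwa [← hr, hrβ, dmul_sub_one_right hb]

end DigitSum

theorem dismal_prime_iff_sum_prime_divisors_general (b : ℕ) (hb : 2 ≤ b) (n : ℕ)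
    (hn : 0 < n) :
    DPrime b n ↔ ddigitSum b (primeDivisors b n) = n := by
  refine ⟨fun hp => by rw [hp.primeDivisors_eq hb, ddigitSum_singleton hb], fun hsum => ?_⟩
  exact (dPrime_and_dDvd_of_mem_primeDivisors <| mem_of_ddigitSum_eq hb hn.ne'
    (fun _ => dPrime_and_dDvd_of_mem_primeDivisors) hsum).1

/-- a number `n ≠ b - 1` is a dismal prime iff the dismal sum of
its distinct dismal prime divisors equals `n`. -/
theorem dismal_prime_iff_sum_prime_divisors (b : ℕ) (hb : 2 ≤ b) (n : ℕ)
    (hn : 0 < n) (hne : n ≠ b - 1) :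
    DPrime b n ↔ ddigitSum b (primeDivisors b n) = n :=
  dismal_prime_iff_sum_prime_divisors_general b hb n hn
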